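/- Every input drawn from the distribution D_N is 1/4-far from satisfying the balancing formula of height h (i.e., one must change more than a 1/4 fraction of the 2^h input variables to make the root evaluate to a value other than F). -/

import Mathlib

/-- The 4-letter alphabet `Σ = {0, 1, P, F}` of the balancing formula. -/
inductive Sig4 where
  | zero | one | P | F
deriving DecidableEq

/-- The balancing gate. -/
def bgate : Sig4 → Sig4 → Sig4
  | .zero, .zero => .zero
  | .one, .one => .one
  | .one, .zero => .P
  | .zero, .one => .P
  | .P, .P => .P
  | _, _ => .F

/-- The value computed at the root of the balancing formula of height `h`
on the Boolean input `a` (read at positions `0, …, 2^h - 1`). -/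
def balEval : ℕ → (ℕ → Bool) → Sig4
  | 0, a => if a 0 then .one else .zero
  | h + 1, a => bgate (balEval h a) (balEval h (fun i => a (i + 2 ^ h)))

/-- The number of `1`-values among the first `m` positions of `a`. -/
def ones (m : ℕ) (a : ℕ → Bool) : ℕ :=
  ((Finset.range m).filter (fun j => a j = true)).card

/-! If the balancing formula does not output `F`, then neither does any subformula, and a
subformula of height `k` outputs `0`, `1` or `P` only when its `2^k` inputs contain no ones,
only ones, or exactly half ones. A `D_N` input has a quarter or three quarters of ones in every
block of `2^k` variables, so at least `2^(k-2)` variables of each of the `2^(h-k)` blocks must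
change: `2^(h-2)` in total. -/

open Finset Nat

namespace Sig4

/-- `s.Describes n c`: a block of `n` inputs with `c` ones can evaluate to `s`. -/
def Describes : Sig4 → ℕ → ℕ → Prop
  | zero, _, c => c = 0
  | one, n, c => c = n
  | P, n, c => 2 * c = n
  | F, _, _ => True

theorem describes_bgate {x y : Sig4} {n c d : ℕ} (hx : x.Describes n c) (hy : y.Describes n d) :
    (bgate x y).Describes (n + n) (c + d) := by
  cases x <;> cases y <;> simp only [bgate, Describes] at hx hy ⊢ <;> omega

end Sig4

theorem bgate_ne_F {x y : Sig4} (h : bgate x y ≠ .F) : x ≠ .F ∧ y ≠ .F := by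
  cases x <;> cases y <;> simp [bgate] at h ⊢

theorem ones_eq_count (m : ℕ) (a : ℕ → Bool) : ones m a = count (fun j => a j = true) m :=
  (count_eq_card_filter_range _ _).symm

theorem ones_add (m n : ℕ) (a : ℕ → Bool) :
    ones (m + n) a = ones m a + ones n (fun j => a (j + m)) := by
  simp only [ones_eq_count, count_add]
  simp_rw [add_comm m]

theorem count_mul_eq_sum (p : ℕ → Prop) [DecidablePred p] (B s : ℕ) :
    count p (B * s) = ∑ i ∈ range B, count (fun r => p (i * s + r)) s := by
  induction B with
  | zero => simp
  | succ B ih => rw [Nat.succ_mul, count_add, ih, sum_range_succ]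

theorem ones_le_ones_add_count_ne (m : ℕ) (u v : ℕ → Bool) :
    ones m u ≤ ones m v + count (fun j => u j ≠ v j) m := by
  simp only [ones_eq_count]
  induction m with
  | zero => simp
  | succ m ih =>
    have hstep : (if u m = true then 1 else 0) ≤
        (if v m = true then 1 else 0) + (if u m ≠ v m then 1 else 0) := by
      cases u m <;> cases v m <;> decide
    simp only [count_succ]
    omega

theorem ones_comp_div (n : ℕ) {s : ℕ} (hs : 0 < s) (w : ℕ → Bool) :
    ones (n * s) (fun r => w (r / s)) = ones n w * s := by
  induction n with
  | zero => simp [ones]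
  | succ n ih =>
    have hblock : ones s (fun r => w ((r + n * s) / s)) = if w n then s else 0 := by
      have hdiv : ∀ r < s, (r + n * s) / s = n := fun r hr => by
        rw [Nat.add_mul_div_right _ _ hs, Nat.div_eq_of_lt hr, zero_add]
      rw [ones_eq_count]
      split_ifs with hw
      · exact count_of_forall fun r hr => by rw [hdiv r hr, hw]
      · exact (count_iff_forall_not).2 fun r hr => by rw [hdiv r hr]; exact hw
    rw [Nat.succ_mul, ones_add, ih, hblock, ones, ones, range_add_one, filter_insert]
    split_ifs with hw
    · rw [card_insert_of_notMem (by simp), Nat.succ_mul]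
    · rw [add_zero]

theorem balEval_describes (m : ℕ) (a : ℕ → Bool) :
    (balEval m a).Describes (2 ^ m) (ones (2 ^ m) a) := by
  induction m generalizing a with
  | zero => cases h : a 0 <;> simp [balEval, ones, h, Sig4.Describes, range_one, filter_singleton]
  | succ m ih =>
    rw [pow_succ, mul_two, ones_add]
    exact Sig4.describes_bgate (ih a) (ih _)

theorem ones_of_balEval_ne_F {m : ℕ} {a : ℕ → Bool} (ha : balEval m a ≠ .F) :
    ones (2 ^ m) a = 0 ∨ ones (2 ^ m) a = 2 ^ m ∨ 2 * ones (2 ^ m) a = 2 ^ m := by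
  have h := balEval_describes m a
  cases hs : balEval m a <;> simp only [hs, Sig4.Describes] at h ha <;> tauto

theorem balEval_block_ne_F (k m : ℕ) (a : ℕ → Bool) (ha : balEval (k + m) a ≠ .F) {i : ℕ}
    (hi : i < 2 ^ m) : balEval k (fun j => a (i * 2 ^ k + j)) ≠ .F := by
  induction m generalizing a i with
  | zero =>
    obtain rfl : i = 0 := by simpa using hi
    simpa using ha
  | succ m ih =>
    rw [← add_assoc] at ha
    obtain ⟨hleft, hright⟩ := bgate_ne_F ha
    rcases lt_or_ge i (2 ^ m) with hi' | hi'
    · exact ih a hleft hi'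
    · obtain ⟨i', rfl⟩ := Nat.exists_eq_add_of_le' hi'
      have hshift : ∀ j, i' * 2 ^ k + j + 2 ^ (k + m) = (i' + 2 ^ m) * 2 ^ k + j := fun j => by
        ring
      simpa only [hshift] using ih _ hright (i := i') (by rw [pow_succ] at hi; omega)

theorem le_count_ne_of_quarters {s : ℕ} (hs : 0 < s) {w b : ℕ → Bool}
    (hw : ones 4 w = 1 ∨ ones 4 w = 3)
    (hb : ones (4 * s) b = 0 ∨ ones (4 * s) b = 4 * s ∨ 2 * ones (4 * s) b = 4 * s) :
    s ≤ count (fun r => w (r / s) ≠ b r) (4 * s) := by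
  have hwb := ones_le_ones_add_count_ne (4 * s) (fun r => w (r / s)) b
  have hbw := ones_le_ones_add_count_ne (4 * s) b (fun r => w (r / s))
  simp only [ones_comp_div 4 hs, ne_comm (a := b _)] at hwb hbw
  rcases hw with hw | hw <;> rw [hw] at hwb hbw <;> omega

theorem pow_le_four_mul_count_ne {h k : ℕ} (hk2 : 2 ≤ k) (hkh : k ≤ h)
    {z : ℕ → ℕ → Bool} (hz : ∀ i < 2 ^ (h - k), ones 4 (z i) = 1 ∨ ones 4 (z i) = 3)
    {a : ℕ → Bool} (ha : balEval h a ≠ .F) :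
    2 ^ h ≤ 4 * count (fun n => z (n / 2 ^ k) (n % 2 ^ k / 2 ^ (k - 2)) ≠ a n) (2 ^ h) := by
  set s := 2 ^ (k - 2)
  have hs : 0 < s := by positivity
  have hks : 2 ^ k = 4 * s := by rw [← pow_sub_mul_pow 2 hk2]; ring
  have hhk : 2 ^ h = 2 ^ (h - k) * 2 ^ k := by rw [← pow_add, Nat.sub_add_cancel hkh]
  have hblock : ∀ i < 2 ^ (h - k),
      s ≤ count (fun r => z ((i * 2 ^ k + r) / 2 ^ k) ((i * 2 ^ k + r) % 2 ^ k / s) ≠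
        a (i * 2 ^ k + r)) (2 ^ k) := by
    intro i hi
    have hb := ones_of_balEval_ne_F
      (balEval_block_ne_F k (h - k) a (by rwa [Nat.add_sub_cancel' hkh]) hi)
    rw [hks] at hb ⊢
    refine (le_count_ne_of_quarters hs (hz i hi) hb).trans <|
      count_mono_left fun r hr hne => ?_
    rwa [Nat.mul_comm, Nat.mul_add_div (by omega), Nat.div_eq_of_lt hr, add_zero,
      Nat.mul_add_mod_self_left, Nat.mod_eq_of_lt hr, Nat.mul_comm]
  rw [hhk, count_mul_eq_sum]
  calc 2 ^ (h - k) * 2 ^ k = 4 * (2 ^ (h - k) * s) := by rw [hks]; ring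
    _ ≤ _ := by
      gcongr
      simpa using card_nsmul_le_sum _ _ s fun i hi => hblock i (mem_range.1 hi)

/-- every input produced by the distribution `D_N` (for any
choice of the level `k` and of the quadruple patterns `z i`, each having exactly
one or exactly three `1`s) is `1/4`-far from satisfying the balancing formula of
height `h`: every accepted assignment differs from it on at least a `1/4`
fraction of the `2^h` variables. -/
theorem DN_far (h k : ℕ) (hk2 : 2 ≤ k) (hkh : k ≤ h) (z : ℕ → ℕ → Bool)
    (hz : ∀ i < 2 ^ (h - k),
      ((Finset.range 4).filter (fun j => z i j = true)).card = 1 ∨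
      ((Finset.range 4).filter (fun j => z i j = true)).card = 3) :
    ∀ a' : ℕ → Bool, balEval h a' ≠ Sig4.F →
      (1 / 4 : ℝ) ≤
        (((Finset.range (2 ^ h)).filter
            (fun n => z (n / 2 ^ k) (n % 2 ^ k / 2 ^ (k - 2)) ≠ a' n)).card : ℝ)
          / (2 ^ h : ℝ) := by
  intro a' ha'
  have hfar := pow_le_four_mul_count_ne hk2 hkh hz ha'
  rw [count_eq_card_filter_range] at hfar
  rw [le_div_iff₀ (by positivity)]
  have hfar' := (Nat.cast_le (α := ℝ)).2 hfar
  push_cast at hfar'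
  linarith
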